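/- arXiv:1803.02792 — 3 statements merged into one kernel-verified Lean document; each statement's English description precedes it below -/
import Mathlib

section
/- For any integers x_1 < x_2 < ⋯ < x_n, the product ∏_{1 ≤ i < j ≤ n} (x_j − x_i)/(j − i) is a positive integer. -/
/-!
The numerator `∏_{i<j} (x j - x i)` is the Vandermonde determinant of `x`, and the denominator
`∏_{i<j} (j - i)` is the Vandermonde determinant of `0, 1, …, n - 1`, which is the superfactorial
`0! 1! ⋯ (n-1)!`. Column operations turn the columns `x ^ k` into `k! * (x choose k)` (after
shifting `x` to be nonnegative), so the superfactorial divides the integer Vandermonde determinant;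
the quotient is positive because every factor `x j - x i` is.
-/

open Finset Matrix

theorem Nat.superFactorial_pos (n : ℕ) : 0 < n.superFactorial := by
  induction n with
  | zero => simp
  | succ n ih => rw [superFactorial_succ]; exact mul_pos n.succ.factorial_pos ih

theorem Finset.prod_filter_lt_eq_prod_prod_Ioi {α M : Type*} [Fintype α] [LinearOrder α]
    [LocallyFiniteOrderTop α] [CommMonoid M] (f : α → α → M) :
    ∏ p ∈ univ.filter (fun p : α × α => p.1 < p.2), f p.1 p.2 = ∏ i, ∏ j ∈ Ioi i, f i j :=
  prod_finset_product' _ _ _ (by simp)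

theorem Matrix.det_vandermonde_pos {R : Type*} [CommRing R] [PartialOrder R]
    [IsStrictOrderedRing R] {n : ℕ} {v : Fin n → R} (hv : StrictMono v) :
    0 < (vandermonde v).det := by
  rw [det_vandermonde]
  exact prod_pos fun i _ => prod_pos fun j hj => sub_pos.2 (hv (mem_Ioi.1 hj))

theorem Matrix.prod_prod_Ioi_sub_div_sub_eq_det_vandermonde_div {K : Type*} [Field K] {n : ℕ}
    (v : Fin (n + 1) → K) :
    ∏ i, ∏ j ∈ Ioi i, (v j - v i) / ((j : ℕ) - (i : ℕ) : K) =
      (vandermonde v).det / n.superFactorial := by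
  simp only [prod_div_distrib, ← det_vandermonde_id_eq_superFactorial, det_vandermonde]

/-- Cohn–Larsen–Propp integrality: for any strictly increasing integers
`x 0 < x 1 < ⋯ < x (n-1)`, the product `∏_{i<j} (x j − x i)/(j − i)`
is a positive integer. -/
theorem clp_product_pos_integer (n : ℕ) (x : Fin n → ℤ) (hx : StrictMono x) :
    ∃ m : ℕ, 0 < m ∧
      (∏ p ∈ Finset.univ.filter (fun p : Fin n × Fin n => p.1 < p.2),
        ((x p.2 - x p.1 : ℤ) : ℚ) / (((p.2 : ℕ) : ℚ) - ((p.1 : ℕ) : ℚ))) = m := by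
  obtain _ | n := n
  · exact ⟨1, one_pos, by simp⟩
  obtain ⟨c, hc⟩ := superFactorial_dvd_vandermonde_det x
  have hc_pos : 0 < c := pos_of_mul_pos_right (hc ▸ det_vandermonde_pos hx) (by positivity)
  lift c to ℕ using hc_pos.le
  refine ⟨c, by omega, ?_⟩
  have hdet_cast : (vandermonde fun i => (x i : ℚ)).det = (vandermonde x).det := by
    simp [det_vandermonde]
  rw [prod_filter_lt_eq_prod_prod_Ioi fun i j => ((x j - x i : ℤ) : ℚ) / ((j : ℕ) - (i : ℕ) : ℚ)]
  push_cast
  rw [prod_prod_Ioi_sub_div_sub_eq_det_vandermonde_div, hdet_cast, hc]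
  push_cast
  exact mul_div_cancel_left₀ _ (Nat.cast_ne_zero.2 n.superFactorial_pos.ne')
end

section
/- For fixed sequences of nonnegative integers a = (a_1,…,a_m), c = (c_1,…,c_k), b = (b_1,…,b_n) with ∑a_i = ∑b_j, and fixed positive reals x, z, the ratio M(R_{⌊xN⌋,0,⌊zN⌋}(a; c; b)) / M(R_{⌊xN⌋,0,⌊zN⌋}(e_a,o_a; e_c,o_c; e_b,o_b)) converges as N → ∞ to s(a_1,…,a_{m−1})·s(a_2,…,a_m)·s(b_1,…,b_{n−1})·s(b_2,…,b_n)·s(c_1,…,c_{k−1})·s(c_2,…,c_k), where each M is expressed (via Theorems 2.3–2.4) as a product of two Cohn–Larsen–Propp determinant-type products Δ over position sets, and s is the dented-semihexagon tiling count. -/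
open Filter Topology

/-- The hyperfactorial `H(n) = 0!·1!⋯(n−1)!`. -/
def hyperfac (n : ℕ) : ℕ := ∏ k ∈ Finset.range n, Nat.factorial k

/-- `τ a j = a_1 + ⋯ + a_j`, the `j`-th partial sum of a 1-based sequence. -/
def tau (a : ℕ → ℕ) (j : ℕ) : ℕ := ∑ r ∈ Finset.Icc 1 j, a r

/-- The Cohn–Larsen–Propp count of lozenge tilings of a semihexagon with
dents at the positions of a finite set `S` of integers:
`Δ(S) / ∏_{1≤i<j≤n}(j−i) = (∏_{p<q ∈ S}(q−p)) / H(|S|)`. -/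
def Tcount (S : Finset ℤ) : ℚ :=
  (∏ p ∈ S, ∏ q ∈ S.filter (fun q => p < q), ((q : ℚ) - (p : ℚ))) /
    (hyperfac S.card : ℚ)

/-- The dent positions contributed by the even-indexed blocks of a fern with
side-lengths `a_1, a_2, …` (half-length `l`), translated by `o`:
`⋃_{i=1}^{l} [o + τ_{2i−1} + 1, o + τ_{2i}]`. -/
noncomputable def blocksEven (l : ℕ) (a : ℕ → ℕ) (o : ℤ) : Finset ℤ :=
  (Finset.range l).biUnion fun i =>
    Finset.Icc (o + (tau a (2 * i + 1) : ℤ) + 1) (o + (tau a (2 * i + 2) : ℤ))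

/-- The dent positions contributed by the odd-indexed blocks:
`⋃_{i=0}^{l−1} [o + τ_{2i} + 1, o + τ_{2i+1}]`. -/
noncomputable def blocksOdd (l : ℕ) (a : ℕ → ℕ) (o : ℤ) : Finset ℤ :=
  (Finset.range l).biUnion fun i =>
    Finset.Icc (o + (tau a (2 * i) : ℤ) + 1) (o + (tau a (2 * i + 1) : ℤ))

/-- The number of lozenge tilings of the hexagon `R_{X,0,Z}(a; c; b)` with
three collinear ferns removed (ferns of even lengths `2la, 2lc, 2lb`), as
given by the factorization of Theorems 2.3–2.4 at `y = 0`: the product of the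
Cohn–Larsen–Propp counts of the upper and lower dented semihexagons, whose
dent position sets are `A ∪ C ∪ B` with the left fern at offset `0`, the
middle fern at offset `a + ⌊(X+Z)/2⌋` and the right fern at offset
`a + c + X + Z`. -/
noncomputable def Mreg (X Z la lc lb : ℕ) (a c b : ℕ → ℕ) : ℚ :=
  let A : ℤ := (∑ i ∈ Finset.Icc 1 (2 * la), a i : ℕ)
  let Cs : ℤ := (∑ i ∈ Finset.Icc 1 (2 * lc), c i : ℕ)
  let oC : ℤ := A + ((X + Z) / 2 : ℕ)
  let oB : ℤ := A + Cs + X + Z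
  Tcount (blocksEven la a 0 ∪ blocksEven lc c oC ∪ blocksEven lb b oB) *
    Tcount (blocksOdd la a 0 ∪ blocksOdd lc c oC ∪ blocksOdd lb b oB)

/-- The two-term sequence `(u, v)` (1-based). -/
def seq2 (u v : ℕ) : ℕ → ℕ := fun i => if i = 1 then u else v

/-- `∑_{i even} a_i` for a fern of half-length `l`. -/
def evenSum (l : ℕ) (a : ℕ → ℕ) : ℕ := ∑ i ∈ Finset.range l, a (2 * i + 2)

/-- `∑_{i odd} a_i` for a fern of half-length `l`. -/
def oddSum (l : ℕ) (a : ℕ → ℕ) : ℕ := ∑ i ∈ Finset.range l, a (2 * i + 1)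

/-!
Both tiling numbers are products of two Cohn–Larsen–Propp counts `Δ(S)/H(|S|)` whose dent sets
`S` consist of three clusters, one per fern, at mutual distances growing linearly in `N`. For such
a union the product `Δ` splits into the products over the clusters times the cross factors
`∏ (q + t - p)` between clusters at distance `t`, each asymptotic to `t ^ (|S| |T|)`. Normalizing a
fern to `(e, o)` swaps the sizes of its even and odd dent sets, so the even configuration of one
region has the same cluster sizes as the odd configuration of the other: their cross factors have
equal degrees and cancel in the limit. What remains are the counts of the clusters themselves,
those of a normalized fern being intervals, with count `1`.
-/

open Finset

lemma hyperfac_ne_zero (n : ℕ) : hyperfac n ≠ 0 :=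
  prod_ne_zero_iff.2 fun k _ => Nat.factorial_ne_zero k

lemma hyperfac_succ (n : ℕ) : hyperfac (n + 1) = hyperfac n * n.factorial :=
  prod_range_succ _ n

def gapProd (S : Finset ℤ) : ℚ :=
  ∏ p ∈ S, ∏ q ∈ S.filter (fun q => p < q), ((q : ℚ) - (p : ℚ))

def crossProd (S T : Finset ℤ) (t : ℤ) : ℚ :=
  ∏ p ∈ S, ∏ q ∈ T, ((q : ℚ) + t - p)

lemma Tcount_eq_gapProd_div (S : Finset ℤ) : Tcount S = gapProd S / hyperfac S.card := rfl

lemma disjoint_of_forall_lt {S T : Finset ℤ} (h : ∀ p ∈ S, ∀ q ∈ T, p < q) : Disjoint S T :=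
  disjoint_left.2 fun p hpS hpT => (h p hpS p hpT).false

lemma gapProd_union {S T : Finset ℤ} (h : ∀ p ∈ S, ∀ q ∈ T, p < q) :
    gapProd (S ∪ T) = gapProd S * gapProd T * crossProd S T 0 := by
  have hST := disjoint_of_forall_lt h
  have hS : ∀ p ∈ S, (S ∪ T).filter (p < ·) = S.filter (p < ·) ∪ T := fun p hp => by
    rw [filter_union, filter_true_of_mem fun q hq => h p hp q hq]
  have hT : ∀ p ∈ T, (S ∪ T).filter (p < ·) = T.filter (p < ·) := fun p hp => by
    rw [filter_union, filter_false_of_mem fun q hq => (h q hq p hp).not_gt, empty_union]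
  calc gapProd (S ∪ T)
      = (∏ p ∈ S, ∏ q ∈ S.filter (p < ·) ∪ T, ((q : ℚ) - p)) *
          ∏ p ∈ T, ∏ q ∈ T.filter (p < ·), ((q : ℚ) - p) := by
        rw [gapProd, prod_union hST]
        congr 1
        · exact prod_congr rfl fun p hp => by rw [hS p hp]
        · exact prod_congr rfl fun p hp => by rw [hT p hp]
    _ = gapProd S * gapProd T * crossProd S T 0 := by
        rw [prod_congr rfl fun p _ => prod_union (hST.mono_left (filter_subset _ S)),
          prod_mul_distrib]
        simp only [gapProd, crossProd, Int.cast_zero, add_zero]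
        ring

lemma gapProd_image_add (S : Finset ℤ) (t : ℤ) : gapProd (S.image (· + t)) = gapProd S := by
  have hfilter : ∀ p, (S.image (· + t)).filter (p + t < ·) = (S.filter (p < ·)).image (· + t) :=
    fun p => by ext; simp
  simp only [gapProd, prod_image fun _ _ _ _ => add_right_cancel, hfilter]
  refine prod_congr rfl fun p _ => prod_congr rfl fun q _ => ?_
  push_cast
  ring

lemma crossProd_image_add_right (S T : Finset ℤ) (s t : ℤ) :
    crossProd S (T.image (· + s)) t = crossProd S T (s + t) := by
  simp only [crossProd, prod_image fun _ _ _ _ => add_right_cancel]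
  refine prod_congr rfl fun p _ => prod_congr rfl fun q _ => ?_
  push_cast
  ring

lemma crossProd_image_add_left (S T : Finset ℤ) (s t : ℤ) :
    crossProd (S.image (· + s)) T t = crossProd S T (t - s) := by
  simp only [crossProd, prod_image fun _ _ _ _ => add_right_cancel]
  refine prod_congr rfl fun p _ => prod_congr rfl fun q _ => ?_
  push_cast
  ring

lemma crossProd_union_left {S S' : Finset ℤ} (h : Disjoint S S') (T : Finset ℤ) (t : ℤ) :
    crossProd (S ∪ S') T t = crossProd S T t * crossProd S' T t :=
  prod_union h

lemma Tcount_union_image_add {S₁ S₂ S₃ : Finset ℤ} {u v : ℤ}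
    (h₁₂ : ∀ p ∈ S₁, ∀ q ∈ S₂, p < q + u) (h₁₃ : ∀ p ∈ S₁, ∀ q ∈ S₃, p < q + v)
    (h₂₃ : ∀ p ∈ S₂, ∀ q ∈ S₃, p < q + (v - u)) :
    Tcount (S₁ ∪ S₂.image (· + u) ∪ S₃.image (· + v)) =
      Tcount S₁ * Tcount S₂ * Tcount S₃ *
        ((hyperfac S₁.card * hyperfac S₂.card * hyperfac S₃.card : ℚ) /
          hyperfac (S₁.card + S₂.card + S₃.card)) *
        (crossProd S₁ S₂ u * crossProd S₁ S₃ v * crossProd S₂ S₃ (v - u)) := by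
  set S₂' := S₂.image (· + u)
  set S₃' := S₃.image (· + v)
  have h₁₂' : ∀ p ∈ S₁, ∀ q ∈ S₂', p < q := fun p hp => forall_mem_image.2 (h₁₂ p hp)
  have h₁₂₃ : ∀ p ∈ S₁ ∪ S₂', ∀ q ∈ S₃', p < q := by
    intro p hp
    rcases mem_union.1 hp with hp | hp
    · exact forall_mem_image.2 (h₁₃ p hp)
    · obtain ⟨p₂, hp₂, rfl⟩ := mem_image.1 hp
      exact forall_mem_image.2 fun q hq => by linarith [h₂₃ p₂ hp₂ q hq]
  have hcard : (S₁ ∪ S₂' ∪ S₃').card = S₁.card + S₂.card + S₃.card := by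
    rw [card_union_of_disjoint (disjoint_of_forall_lt h₁₂₃),
      card_union_of_disjoint (disjoint_of_forall_lt h₁₂'),
      card_image_of_injective _ (add_left_injective _),
      card_image_of_injective _ (add_left_injective _)]
  rw [Tcount_eq_gapProd_div, hcard, gapProd_union h₁₂₃, gapProd_union h₁₂',
    crossProd_union_left (disjoint_of_forall_lt h₁₂'), gapProd_image_add, gapProd_image_add,
    crossProd_image_add_right, crossProd_image_add_right, crossProd_image_add_right,
    crossProd_image_add_left]
  simp only [Tcount_eq_gapProd_div, add_zero]
  have hH₁ := hyperfac_ne_zero S₁.card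
  have hH₂ := hyperfac_ne_zero S₂.card
  have hH₃ := hyperfac_ne_zero S₃.card
  field_simp

lemma tendsto_crossProd_div_pow (S T : Finset ℤ) :
    Tendsto (fun t : ℤ => crossProd S T t / (t : ℚ) ^ (S.card * T.card)) atTop (𝓝 1) := by
  have hfactor : ∀ p q : ℤ, Tendsto (fun t : ℤ => ((q : ℚ) + t - p) / t) atTop (𝓝 1) := by
    intro p q
    have h := tendsto_const_nhds (x := (1 : ℚ)).add
      ((tendsto_const_nhds (x := ((q : ℚ) - p))).div_atTop
        (tendsto_intCast_atTop_atTop (R := ℚ)))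
    rw [add_zero] at h
    refine h.congr' ?_
    filter_upwards [eventually_ne_atTop 0] with t ht
    field_simp
    ring
  have h := tendsto_finsetProd S fun p _ => tendsto_finsetProd T fun q _ => hfactor p q
  simp only [prod_const_one] at h
  refine h.congr fun t => ?_
  simp only [crossProd, prod_div_distrib, prod_const, ← pow_mul, mul_comm T.card]

lemma tendsto_crossProd_div_crossProd {S T S' T' : Finset ℤ} (hS : S.card = S'.card)
    (hT : T.card = T'.card) :
    Tendsto (fun t : ℤ => crossProd S T t / crossProd S' T' t) atTop (𝓝 1) := by
  have h := (tendsto_crossProd_div_pow S T).div (tendsto_crossProd_div_pow S' T') one_ne_zero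
  rw [div_one, ← hS, ← hT] at h
  refine h.congr' ?_
  filter_upwards [eventually_ne_atTop 0] with t ht
  exact div_div_div_cancel_right₀ (pow_ne_zero _ (Int.cast_ne_zero.2 ht)) _ _

lemma eventually_forall_lt_add (S T : Finset ℤ) :
    ∀ᶠ t in atTop, ∀ p ∈ S, ∀ q ∈ T, p < q + t :=
  (eventually_all_finset S).2 fun p _ => (eventually_all_finset T).2 fun q _ =>
    (eventually_gt_atTop (p - q)).mono fun t ht => by omega

theorem tendsto_Tcount_union_image_add_div {ι : Type*} {l : Filter ι} {u v : ι → ℤ}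
    (hu : Tendsto u l atTop) (hvu : Tendsto (fun i => v i - u i) l atTop)
    {S₁ S₂ S₃ T₁ T₂ T₃ : Finset ℤ} (h₁ : S₁.card = T₁.card) (h₂ : S₂.card = T₂.card)
    (h₃ : S₃.card = T₃.card) :
    Tendsto (fun i => Tcount (S₁ ∪ S₂.image (· + u i) ∪ S₃.image (· + v i)) /
        Tcount (T₁ ∪ T₂.image (· + u i) ∪ T₃.image (· + v i))) l
      (𝓝 (Tcount S₁ * Tcount S₂ * Tcount S₃ / (Tcount T₁ * Tcount T₂ * Tcount T₃))) := by
  have hv : Tendsto v l atTop := (hu.atTop_add_atTop hvu).congr fun i => by ring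
  have hcross : Tendsto (fun i =>
      (crossProd S₁ S₂ (u i) * crossProd S₁ S₃ (v i) * crossProd S₂ S₃ (v i - u i)) /
        (crossProd T₁ T₂ (u i) * crossProd T₁ T₃ (v i) * crossProd T₂ T₃ (v i - u i)))
      l (𝓝 1) := by
    have h := (((tendsto_crossProd_div_crossProd h₁ h₂).comp hu).mul
      ((tendsto_crossProd_div_crossProd h₁ h₃).comp hv)).mul
      ((tendsto_crossProd_div_crossProd h₂ h₃).comp hvu)
    simp only [mul_one] at h
    exact h.congr fun i => by simp only [Function.comp_apply]; ring
  have hκ : (hyperfac S₁.card * hyperfac S₂.card * hyperfac S₃.card : ℚ) /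
      hyperfac (S₁.card + S₂.card + S₃.card) ≠ 0 := by
    simp [hyperfac_ne_zero]
  have hcancel : ∀ {κ : ℚ} (P Q X Y : ℚ), κ ≠ 0 → P * κ * X / (Q * κ * Y) = P / Q * (X / Y) :=
    fun P Q X Y hκ => by rw [mul_div_mul_comm, mul_div_mul_right _ _ hκ]
  have h := (tendsto_const_nhds (x := Tcount S₁ * Tcount S₂ * Tcount S₃ /
    (Tcount T₁ * Tcount T₂ * Tcount T₃))).mul hcross
  rw [mul_one] at h
  refine h.congr' ?_
  filter_upwards [hu.eventually (eventually_forall_lt_add S₁ S₂),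
    hv.eventually (eventually_forall_lt_add S₁ S₃), hvu.eventually (eventually_forall_lt_add S₂ S₃),
    hu.eventually (eventually_forall_lt_add T₁ T₂), hv.eventually (eventually_forall_lt_add T₁ T₃),
    hvu.eventually (eventually_forall_lt_add T₂ T₃)] with i hS₁₂ hS₁₃ hS₂₃ hT₁₂ hT₁₃ hT₂₃
  rw [Tcount_union_image_add hS₁₂ hS₁₃ hS₂₃, Tcount_union_image_add hT₁₂ hT₁₃ hT₂₃, ← h₁, ← h₂,
    ← h₃]
  exact (hcancel _ _ _ _ hκ).symm

lemma tau_succ (a : ℕ → ℕ) (j : ℕ) : tau a (j + 1) = tau a j + a (j + 1) :=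
  sum_Icc_succ_top (by omega) a

lemma tau_mono (a : ℕ → ℕ) : Monotone (tau a) := fun _ _ hij =>
  sum_le_sum_of_subset (Icc_subset_Icc_right hij)

lemma evenSum_add_oddSum (l : ℕ) (a : ℕ → ℕ) : evenSum l a + oddSum l a = tau a (2 * l) := by
  induction l with
  | zero => simp [evenSum, oddSum, tau]
  | succ l ih =>
    simp only [evenSum, oddSum, sum_range_succ] at ih ⊢
    rw [show 2 * (l + 1) = 2 * l + 1 + 1 by ring, tau_succ, tau_succ, ← ih]
    ring

lemma card_biUnion_Icc_tau {f : ℕ → ℕ} (hf : StrictMono f) (l : ℕ) (a : ℕ → ℕ) (o : ℤ) :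
    ((range l).biUnion fun i => Icc (o + tau a (f i) + 1) (o + tau a (f i + 1))).card =
      ∑ i ∈ range l, a (f i + 1) := by
  have hdisj : ∀ i j, i < j → Disjoint (Icc (o + tau a (f i) + 1) (o + tau a (f i + 1)))
      (Icc (o + tau a (f j) + 1) (o + tau a (f j + 1))) := fun i j hij => by
    have : tau a (f i + 1) ≤ tau a (f j) := tau_mono a (hf hij)
    exact disjoint_left.2 fun x hx hx' => by simp only [mem_Icc] at hx hx'; omega
  rw [card_biUnion fun i _ j _ hij =>
    (lt_or_gt_of_ne hij).elim (hdisj i j) fun h => (hdisj j i h).symm]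
  refine sum_congr rfl fun i _ => ?_
  rw [Int.card_Icc, tau_succ]
  omega

lemma blocksEven_card (l : ℕ) (a : ℕ → ℕ) (o : ℤ) : (blocksEven l a o).card = evenSum l a :=
  card_biUnion_Icc_tau (f := (2 * · + 1)) (fun _ _ h => by dsimp only; omega) l a o

lemma blocksOdd_card (l : ℕ) (a : ℕ → ℕ) (o : ℤ) : (blocksOdd l a o).card = oddSum l a :=
  card_biUnion_Icc_tau (f := (2 * ·)) (fun _ _ h => by dsimp only; omega) l a o

lemma blocksEven_eq_image (l : ℕ) (a : ℕ → ℕ) (o : ℤ) :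
    blocksEven l a o = (blocksEven l a 0).image (· + o) := by
  simp only [blocksEven, biUnion_image, image_add_right_Icc]
  exact biUnion_congr rfl fun i _ => by congr 1 <;> ring

lemma blocksOdd_eq_image (l : ℕ) (a : ℕ → ℕ) (o : ℤ) :
    blocksOdd l a o = (blocksOdd l a 0).image (· + o) := by
  simp only [blocksOdd, biUnion_image, image_add_right_Icc]
  exact biUnion_congr rfl fun i _ => by congr 1 <;> ring

lemma Tcount_image_add (S : Finset ℤ) (t : ℤ) : Tcount (S.image (· + t)) = Tcount S := by
  rw [Tcount_eq_gapProd_div, Tcount_eq_gapProd_div, gapProd_image_add,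
    card_image_of_injective _ (add_left_injective t)]

lemma tau_shift (a : ℕ → ℕ) (j : ℕ) : tau (fun i => a (i + 1)) j + a 1 = tau a (j + 1) := by
  induction j with
  | zero => simp [tau]
  | succ j ih => rw [tau_succ, tau_succ a (j + 1), ← ih]; ring

lemma blocksOdd_shift (l : ℕ) (a : ℕ → ℕ) :
    blocksOdd l (fun i => a (i + 1)) (a 1) = blocksEven l a 0 := by
  simp only [blocksOdd, blocksEven]
  refine biUnion_congr rfl fun i _ => ?_
  rw [← tau_shift a (2 * i + 1), ← tau_shift a (2 * i)]
  congr 1 <;> push_cast <;> ring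

lemma Tcount_blocksOdd_shift (l : ℕ) (a : ℕ → ℕ) :
    Tcount (blocksOdd l (fun i => a (i + 1)) 0) = Tcount (blocksEven l a 0) := by
  rw [← blocksOdd_shift, blocksOdd_eq_image _ _ (a 1 : ℤ), Tcount_image_add]

lemma prod_Icc_sub_eq_factorial (m : ℤ) (n : ℕ) :
    ∏ q ∈ Icc (m + 1) (m + n), ((q : ℚ) - m) = n.factorial := by
  rw [Int.Icc_eq_finset_map, prod_map, show (m + n + 1 - (m + 1)).toNat = n by omega,
    ← prod_range_add_one_eq_factorial, Nat.cast_prod]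
  refine prod_congr rfl fun k _ => ?_
  simp only [Function.Embedding.trans_apply, Nat.castEmbedding_apply, addLeftEmbedding_apply]
  push_cast
  ring

lemma gapProd_singleton (x : ℤ) : gapProd {x} = 1 := by
  rw [gapProd, prod_singleton, filter_singleton, if_neg (lt_irrefl x), prod_empty]

lemma gapProd_Icc (m : ℤ) (n : ℕ) : gapProd (Icc (m + 1) (m + n)) = hyperfac n := by
  induction n generalizing m with
  | zero => simp [gapProd, hyperfac]
  | succ n ih =>
    have hsplit : Icc (m + 1) (m + (n + 1 : ℕ)) = {m + 1} ∪ Icc (m + 1 + 1) (m + 1 + n) := by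
      ext q; simp only [mem_union, mem_singleton, mem_Icc]; push_cast; omega
    have hsep : ∀ p ∈ ({m + 1} : Finset ℤ), ∀ q ∈ Icc (m + 1 + 1) (m + 1 + n), p < q := by
      simp only [mem_singleton, mem_Icc]; omega
    rw [hsplit, gapProd_union hsep, ih, hyperfac_succ, Nat.cast_mul,
      ← prod_Icc_sub_eq_factorial (m + 1) n]
    simp [gapProd_singleton, crossProd, mul_comm]

lemma Tcount_Icc (m : ℤ) (n : ℕ) : Tcount (Icc (m + 1) (m + n)) = 1 := by
  rw [Tcount_eq_gapProd_div, gapProd_Icc, Int.card_Icc,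
    show (m + n + 1 - (m + 1)).toNat = n by omega]
  exact div_self (Nat.cast_ne_zero.2 (hyperfac_ne_zero n))

lemma evenSum_one_seq2 (u v : ℕ) : evenSum 1 (seq2 u v) = v := by simp [evenSum, seq2]

lemma oddSum_one_seq2 (u v : ℕ) : oddSum 1 (seq2 u v) = u := by simp [oddSum, seq2]

lemma tau_two_seq2 (u v : ℕ) : tau (seq2 u v) 2 = u + v := by
  rw [tau_succ, tau_succ]
  simp [tau, seq2]

lemma Tcount_blocksOdd_seq2 (u v : ℕ) : Tcount (blocksOdd 1 (seq2 u v) 0) = 1 := by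
  convert Tcount_Icc 0 u using 2
  simp [blocksOdd, tau, seq2]

lemma Tcount_blocksEven_seq2 (u v : ℕ) : Tcount (blocksEven 1 (seq2 u v) 0) = 1 := by
  convert Tcount_Icc u v using 2
  simp only [blocksEven, range_one, singleton_biUnion, mul_zero, zero_add, tau_two_seq2]
  simp [tau, seq2]

lemma Mreg_eq (X Z la lc lb : ℕ) (a c b : ℕ → ℕ) {u v : ℤ}
    (hu : (tau a (2 * la) : ℤ) + ((X + Z) / 2 : ℕ) = u)
    (hv : (tau a (2 * la) : ℤ) + tau c (2 * lc) + X + Z = v) :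
    Mreg X Z la lc lb a c b =
      Tcount (blocksEven la a 0 ∪ (blocksEven lc c 0).image (· + u) ∪
          (blocksEven lb b 0).image (· + v)) *
        Tcount (blocksOdd la a 0 ∪ (blocksOdd lc c 0).image (· + u) ∪
          (blocksOdd lb b 0).image (· + v)) := by
  subst hu hv
  simp only [Mreg, ← blocksEven_eq_image, ← blocksOdd_eq_image]
  rfl

lemma tau_seq2_evenSum_oddSum (l : ℕ) (a : ℕ → ℕ) :
    tau (seq2 (evenSum l a) (oddSum l a)) (2 * 1) = tau a (2 * l) := by
  rw [Nat.mul_one, tau_two_seq2, evenSum_add_oddSum]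

theorem tendsto_Mreg_div_Mreg_seq2 {ι : Type*} {l : Filter ι} {X Z : ι → ℕ}
    (hXZ : Tendsto (fun i => X i + Z i) l atTop) (la lc lb : ℕ) (a c b : ℕ → ℕ) :
    Tendsto (fun i => Mreg (X i) (Z i) la lc lb a c b /
        Mreg (X i) (Z i) 1 1 1 (seq2 (evenSum la a) (oddSum la a))
          (seq2 (evenSum lc c) (oddSum lc c)) (seq2 (evenSum lb b) (oddSum lb b))) l
      (𝓝 (Tcount (blocksEven la a 0) * Tcount (blocksEven lc c 0) * Tcount (blocksEven lb b 0) *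
        (Tcount (blocksOdd la a 0) * Tcount (blocksOdd lc c 0) * Tcount (blocksOdd lb b 0)))) := by
  have hhalf : Tendsto (fun i => (((X i + Z i) / 2 : ℕ) : ℤ)) l atTop :=
    tendsto_natCast_atTop_atTop.comp ((Nat.tendsto_div_const_atTop two_ne_zero).comp hXZ)
  have hu : Tendsto (fun i => (tau a (2 * la) : ℤ) + ((X i + Z i) / 2 : ℕ)) l atTop :=
    tendsto_atTop_mono (fun i => by omega) hhalf
  have hvu : Tendsto (fun i => ((tau a (2 * la) : ℤ) + tau c (2 * lc) + X i + Z i) -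
      ((tau a (2 * la) : ℤ) + ((X i + Z i) / 2 : ℕ))) l atTop :=
    tendsto_atTop_mono (fun i => by omega) hhalf
  -- normalizing a fern swaps the sizes of its even and odd blocks
  have hE := tendsto_Tcount_union_image_add_div hu hvu
    (S₁ := blocksEven la a 0) (S₂ := blocksEven lc c 0) (S₃ := blocksEven lb b 0)
    (T₁ := blocksOdd 1 (seq2 (evenSum la a) (oddSum la a)) 0)
    (T₂ := blocksOdd 1 (seq2 (evenSum lc c) (oddSum lc c)) 0)
    (T₃ := blocksOdd 1 (seq2 (evenSum lb b) (oddSum lb b)) 0)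
    (by rw [blocksEven_card, blocksOdd_card, oddSum_one_seq2])
    (by rw [blocksEven_card, blocksOdd_card, oddSum_one_seq2])
    (by rw [blocksEven_card, blocksOdd_card, oddSum_one_seq2])
  have hO := tendsto_Tcount_union_image_add_div hu hvu
    (S₁ := blocksOdd la a 0) (S₂ := blocksOdd lc c 0) (S₃ := blocksOdd lb b 0)
    (T₁ := blocksEven 1 (seq2 (evenSum la a) (oddSum la a)) 0)
    (T₂ := blocksEven 1 (seq2 (evenSum lc c) (oddSum lc c)) 0)
    (T₃ := blocksEven 1 (seq2 (evenSum lb b) (oddSum lb b)) 0)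
    (by rw [blocksOdd_card, blocksEven_card, evenSum_one_seq2])
    (by rw [blocksOdd_card, blocksEven_card, evenSum_one_seq2])
    (by rw [blocksOdd_card, blocksEven_card, evenSum_one_seq2])
  simp only [Tcount_blocksOdd_seq2, Tcount_blocksEven_seq2, mul_one, div_one] at hE hO
  refine (hE.mul hO).congr fun i => ?_
  rw [Mreg_eq _ _ _ _ _ _ _ _ rfl rfl, Mreg_eq _ _ _ _ _ _ _ _
    (by rw [tau_seq2_evenSum_oddSum]) (by rw [tau_seq2_evenSum_oddSum, tau_seq2_evenSum_oddSum])]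
  ring

theorem dual_macmahon_three_ferns_general (x z : ℝ) (hx : 0 < x)
    (la lc lb : ℕ) (a c b : ℕ → ℕ) :
    Tendsto (fun N : ℕ =>
        ((Mreg (Int.toNat ⌊x * N⌋) (Int.toNat ⌊z * N⌋) la lc lb a c b /
          Mreg (Int.toNat ⌊x * N⌋) (Int.toNat ⌊z * N⌋) 1 1 1
            (seq2 (evenSum la a) (oddSum la a))
            (seq2 (evenSum lc c) (oddSum lc c))
            (seq2 (evenSum lb b) (oddSum lb b)) : ℚ) : ℝ))
      atTop
      (𝓝 (((Tcount (blocksOdd la a 0) *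
            Tcount (blocksOdd la (fun i => a (i + 1)) 0) *
            Tcount (blocksOdd lb b 0) *
            Tcount (blocksOdd lb (fun i => b (i + 1)) 0) *
            Tcount (blocksOdd lc c 0) *
            Tcount (blocksOdd lc (fun i => c (i + 1)) 0) : ℚ) : ℝ))) := by
  have hX : Tendsto (fun N : ℕ => Int.toNat ⌊x * N⌋) atTop atTop := by
    simp only [Int.floor_toNat]
    exact tendsto_nat_floor_atTop.comp (tendsto_natCast_atTop_atTop.const_mul_atTop hx)
  have hXZ := tendsto_atTop_mono (fun N : ℕ => Nat.le_add_right _ (Int.toNat ⌊z * N⌋)) hX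
  have h := (Rat.continuous_coe_real.tendsto _).comp
    (tendsto_Mreg_div_Mreg_seq2 hXZ la lc lb a c b)
  rw [Tcount_blocksOdd_shift, Tcount_blocksOdd_shift, Tcount_blocksOdd_shift]
  convert h using 2
  · rfl
  · push_cast
    ring

/-- **Dual of MacMahon's theorem for three ferns (Theorem 2.10).**
For fixed ferns `a, c, b` with `∑ a_i = ∑ b_j` and fixed positive reals
`x, z`, the ratio of the numbers of lozenge tilings of
`R_{⌊xN⌋,0,⌊zN⌋}(a; c; b)` and of its normalization
`R_{⌊xN⌋,0,⌊zN⌋}(e_a,o_a; e_c,o_c; e_b,o_b)` converges, as `N → ∞`, to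
`s(a_1,…,a_{m−1}) s(a_2,…,a_m) s(b_1,…,b_{n−1}) s(b_2,…,b_n)
 s(c_1,…,c_{k−1}) s(c_2,…,c_k)`. -/
theorem dual_macmahon_three_ferns (x z : ℝ) (hx : 0 < x) (hz : 0 < z)
    (la lc lb : ℕ) (a c b : ℕ → ℕ)
    (hab : ∑ i ∈ Finset.Icc 1 (2 * la), a i = ∑ i ∈ Finset.Icc 1 (2 * lb), b i) :
    Tendsto (fun N : ℕ =>
        ((Mreg (Int.toNat ⌊x * N⌋) (Int.toNat ⌊z * N⌋) la lc lb a c b /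
          Mreg (Int.toNat ⌊x * N⌋) (Int.toNat ⌊z * N⌋) 1 1 1
            (seq2 (evenSum la a) (oddSum la a))
            (seq2 (evenSum lc c) (oddSum lc c))
            (seq2 (evenSum lb b) (oddSum lb b)) : ℚ) : ℝ))
      atTop
      (𝓝 (((Tcount (blocksOdd la a 0) *
            Tcount (blocksOdd la (fun i => a (i + 1)) 0) *
            Tcount (blocksOdd lb b 0) *
            Tcount (blocksOdd lb (fun i => b (i + 1)) 0) *
            Tcount (blocksOdd lc c 0) *
            Tcount (blocksOdd lc (fun i => c (i + 1)) 0) : ℚ) : ℝ))) :=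
  dual_macmahon_three_ferns_general x z hx la lc lb a c b
end

section
/- For all nonnegative integers a, b, c, the MacMahon product P(a,b,c) = H(a)H(b)H(c)H(a+b+c) / (H(a+b)H(b+c)H(c+a)) is a positive integer. -/
open Finset Nat

/-- `T q n = ∑_{k<n} ⌊k/q⌋`. -/
def Tq (q n : ℕ) : ℕ := ∑ k ∈ Finset.range n, k / q

lemma Tq_step (q n : ℕ) (hq : 0 < q) : Tq q (q + n) = Tq q n + n := by
  unfold Tq
  rw [Finset.sum_range_add]
  have h1 : ∑ k ∈ Finset.range q, k / q = 0 :=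
    Finset.sum_eq_zero fun k hk => Nat.div_eq_of_lt (Finset.mem_range.mp hk)
  have h2 : ∀ k, (q + k) / q = k / q + 1 := fun k => by
    rw [add_comm q k, Nat.add_div_right _ hq]
  simp only [h2, h1, Finset.sum_add_distrib, Finset.sum_const, Finset.card_range, smul_eq_mul,
    mul_one, zero_add, add_comm]

lemma Tq_small (q n : ℕ) (hq : 0 < q) (h : n ≤ 3 * q) : Tq q n = (n - q) + (n - 2 * q) := by
  induction n with
  | zero => simp [Tq]
  | succ n ih =>
    have hn : n ≤ 3 * q := by omega
    rw [Tq, Finset.sum_range_succ, ← Tq, ih hn]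
    have h0 : n < q → n / q = 0 := fun h => Nat.div_eq_of_lt h
    have h1 : q ≤ n → n < 2 * q → n / q = 1 := fun ha hb =>
      Nat.div_eq_of_lt_le (by omega) (by omega)
    have h2 : 2 * q ≤ n → n < 3 * q → n / q = 2 := fun ha hb =>
      Nat.div_eq_of_lt_le (by omega) (by omega)
    omega

lemma Tq_super (q : ℕ) (hq : 0 < q) (a b c : ℕ) :
    Tq q (a + b) + Tq q (b + c) + Tq q (c + a) ≤
      Tq q (a + b + c) + (Tq q a + Tq q b + Tq q c) := by
  have H : ∀ n a b c, a + b + c ≤ n →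
      Tq q (a + b) + Tq q (b + c) + Tq q (c + a) ≤
        Tq q (a + b + c) + (Tq q a + Tq q b + Tq q c) := by
    intro n
    induction n using Nat.strong_induction_on with
    | _ n ih =>
      intro a b c hn
      rcases lt_or_ge a q with ha | ha
      · rcases lt_or_ge b q with hb | hb
        · rcases lt_or_ge c q with hc | hc
          · -- base case: all < q
            rw [Tq_small q (a+b) hq (by omega), Tq_small q (b+c) hq (by omega),
              Tq_small q (c+a) hq (by omega), Tq_small q (a+b+c) hq (by omega),
              Tq_small q a hq (by omega), Tq_small q b hq (by omega),
              Tq_small q c hq (by omega)]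
            omega
          · -- c ≥ q
            obtain ⟨c', rfl⟩ : ∃ c', c = q + c' := ⟨c - q, by omega⟩
            have e1 : b + (q + c') = q + (b + c') := by ring
            have e2 : (q + c') + a = q + (c' + a) := by ring
            have e3 : a + b + (q + c') = q + (a + b + c') := by ring
            rw [e1, e2, e3, Tq_step q _ hq, Tq_step q _ hq, Tq_step q _ hq, Tq_step q _ hq]
            have := ih (a + b + c') (by omega) a b c' (by omega)
            omega
        · -- b ≥ q
          obtain ⟨b', rfl⟩ : ∃ b', b = q + b' := ⟨b - q, by omega⟩
          have e1 : a + (q + b') = q + (a + b') := by ring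
          have e2 : (q + b') + c = q + (b' + c) := by ring
          have e3 : a + (q + b') + c = q + (a + b' + c) := by ring
          rw [e3, e1, e2, Tq_step q _ hq, Tq_step q _ hq, Tq_step q _ hq, Tq_step q _ hq]
          have := ih (a + b' + c) (by omega) a b' c (by omega)
          omega
      · -- a ≥ q
        obtain ⟨a', rfl⟩ : ∃ a', a = q + a' := ⟨a - q, by omega⟩
        have e1 : (q + a') + b = q + (a' + b) := by ring
        have e2 : c + (q + a') = q + (c + a') := by ring
        have e3 : (q + a') + b + c = q + (a' + b + c) := by ring
        rw [e3, e1, e2, Tq_step q _ hq, Tq_step q _ hq, Tq_step q _ hq, Tq_step q _ hq]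
        have := ih (a' + b + c) (by omega) a' b c (by omega)
        omega
  exact H (a + b + c) a b c le_rfl

lemma Tq_shift (q x c : ℕ) : Tq q (x + c) = Tq q x + ∑ k ∈ Finset.range c, (x + k) / q := by
  rw [Tq, Finset.sum_range_add]; rfl

lemma sum_div_le (q a b c : ℕ) (hq : 0 < q) :
    ∑ k ∈ Finset.range c, ((a + k) / q + (b + k) / q) ≤
      ∑ k ∈ Finset.range c, (k / q + (a + b + k) / q) := by
  have h1 := Tq_shift q a c
  have h2 := Tq_shift q b c
  have h3 := Tq_shift q (a + b) c
  have h4 : Tq q c = ∑ k ∈ Finset.range c, k / q := rfl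
  have h5 := Tq_super q hq a b c
  have e1 : ∑ k ∈ Finset.range c, ((a + k) / q + (b + k) / q) =
      (∑ k ∈ Finset.range c, (a + k) / q) + ∑ k ∈ Finset.range c, (b + k) / q :=
    Finset.sum_add_distrib
  have e2 : ∑ k ∈ Finset.range c, (k / q + (a + b + k) / q) =
      (∑ k ∈ Finset.range c, k / q) + ∑ k ∈ Finset.range c, (a + b + k) / q :=
    Finset.sum_add_distrib
  rw [show c + a = a + c from add_comm c a, h1, h2] at h5
  rw [show a + b + c = (a + b) + c from rfl, h3] at h5
  omega

lemma key_dvd (a b c : ℕ) :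
    (∏ k ∈ Finset.range c, ((a + k)! * (b + k)!)) ∣
      ∏ k ∈ Finset.range c, (k ! * (a + b + k)!) := by
  have hD : (∏ k ∈ Finset.range c, ((a + k)! * (b + k)!)) ≠ 0 :=
    Finset.prod_ne_zero_iff.mpr fun k _ =>
      Nat.mul_ne_zero (Nat.factorial_ne_zero _) (Nat.factorial_ne_zero _)
  have hN : (∏ k ∈ Finset.range c, (k ! * (a + b + k)!)) ≠ 0 :=
    Finset.prod_ne_zero_iff.mpr fun k _ =>
      Nat.mul_ne_zero (Nat.factorial_ne_zero _) (Nat.factorial_ne_zero _)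
  rw [← Nat.factorization_le_iff_dvd hD hN]
  rw [Nat.factorization_prod fun k _ =>
      Nat.mul_ne_zero (Nat.factorial_ne_zero _) (Nat.factorial_ne_zero _),
    Nat.factorization_prod fun k _ =>
      Nat.mul_ne_zero (Nat.factorial_ne_zero _) (Nat.factorial_ne_zero _)]
  intro p
  rw [Finset.sum_apply', Finset.sum_apply']
  by_cases hp : p.Prime
  · haveI : Fact p.Prime := ⟨hp⟩
    set B := a + b + c + 1 with hB
    have hfac : ∀ n : ℕ, n < B → (n !).factorization p = ∑ i ∈ Finset.Ico 1 B, n / p ^ i := by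
      intro n hn
      rw [Nat.factorization_def _ hp]
      exact padicValNat_factorial (lt_of_le_of_lt (Nat.log_le_self p n) hn)
    calc ∑ k ∈ Finset.range c, ((a + k)! * (b + k)!).factorization p
        = ∑ k ∈ Finset.range c, (∑ i ∈ Finset.Ico 1 B, (a + k) / p ^ i
            + ∑ i ∈ Finset.Ico 1 B, (b + k) / p ^ i) := by
          refine Finset.sum_congr rfl fun k hk => ?_
          have hkc := Finset.mem_range.mp hk
          rw [Nat.factorization_mul (Nat.factorial_ne_zero _) (Nat.factorial_ne_zero _),
            Finsupp.add_apply, hfac _ (by omega), hfac _ (by omega)]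
      _ = ∑ i ∈ Finset.Ico 1 B, ∑ k ∈ Finset.range c,
            ((a + k) / p ^ i + (b + k) / p ^ i) := by
          simp_rw [← Finset.sum_add_distrib]
          exact Finset.sum_comm
      _ ≤ ∑ i ∈ Finset.Ico 1 B, ∑ k ∈ Finset.range c,
            (k / p ^ i + (a + b + k) / p ^ i) := by
          refine Finset.sum_le_sum fun i _ => ?_
          exact sum_div_le (p ^ i) a b c (Nat.pow_pos (n := i) hp.pos)
      _ = ∑ k ∈ Finset.range c, (k ! * (a + b + k)!).factorization p := by
          rw [Finset.sum_comm]
          refine Finset.sum_congr rfl fun k hk => ?_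
          have hkc := Finset.mem_range.mp hk
          rw [Nat.factorization_mul (Nat.factorial_ne_zero _) (Nat.factorial_ne_zero _),
            Finsupp.add_apply, hfac _ (by omega), hfac _ (by omega), Finset.sum_add_distrib]
  · simp [Nat.factorization_eq_zero_of_not_prime _ hp]

lemma hyperfac_add (x c : ℕ) :
    hyperfac (x + c) = hyperfac x * ∏ k ∈ Finset.range c, (x + k)! := by
  rw [hyperfac, hyperfac, Finset.prod_range_add]

lemma hyperfac_pos (n : ℕ) : 0 < hyperfac n :=
  Finset.prod_pos fun k _ => Nat.factorial_pos k

lemma hyper_id (a b c : ℕ) :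
    hyperfac a * hyperfac b * hyperfac c * hyperfac (a + b + c) *
        ∏ k ∈ Finset.range c, ((a + k)! * (b + k)!) =
      hyperfac (a + b) * hyperfac (b + c) * hyperfac (c + a) *
        ∏ k ∈ Finset.range c, (k ! * (a + b + k)!) := by
  have h1 : hyperfac (a + b + c) = hyperfac (a + b) * ∏ k ∈ Finset.range c, (a + b + k)! :=
    hyperfac_add (a + b) c
  have h2 : hyperfac (b + c) = hyperfac b * ∏ k ∈ Finset.range c, (b + k)! :=
    hyperfac_add b c
  have h3 : hyperfac (c + a) = hyperfac a * ∏ k ∈ Finset.range c, (a + k)! := by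
    rw [add_comm c a]; exact hyperfac_add a c
  have h4 : hyperfac c = ∏ k ∈ Finset.range c, k ! := rfl
  rw [h1, h2, h3, h4, Finset.prod_mul_distrib, Finset.prod_mul_distrib]
  ring

/-- The MacMahon product
`P(a,b,c) = H(a)H(b)H(c)H(a+b+c)/(H(a+b)H(b+c)H(c+a))` is a positive integer
for all nonnegative integers `a, b, c`. -/
theorem macmahon_product_pos_integer (a b c : ℕ) :
    ∃ m : ℕ, 0 < m ∧
      ((hyperfac a * hyperfac b * hyperfac c * hyperfac (a + b + c) : ℕ) : ℚ) /
        ((hyperfac (a + b) * hyperfac (b + c) * hyperfac (c + a) : ℕ) : ℚ) = m := by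
  obtain ⟨t, ht⟩ := key_dvd a b c
  have hD : 0 < ∏ k ∈ Finset.range c, ((a + k)! * (b + k)!) :=
    Finset.prod_pos fun k _ => Nat.mul_pos (Nat.factorial_pos _) (Nat.factorial_pos _)
  have hid := hyper_id a b c
  rw [ht] at hid
  have hnum : hyperfac a * hyperfac b * hyperfac c * hyperfac (a + b + c) =
      hyperfac (a + b) * hyperfac (b + c) * hyperfac (c + a) * t := by
    have h2 : hyperfac a * hyperfac b * hyperfac c * hyperfac (a + b + c) *
        ∏ k ∈ Finset.range c, ((a + k)! * (b + k)!) =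
        (hyperfac (a + b) * hyperfac (b + c) * hyperfac (c + a) * t) *
        ∏ k ∈ Finset.range c, ((a + k)! * (b + k)!) := by rw [hid]; ring
    exact Nat.eq_of_mul_eq_mul_right hD h2
  have ht0 : 0 < t := by
    rcases Nat.eq_zero_or_pos t with h | h
    · exfalso
      have := hnum
      rw [h, mul_zero] at this
      have h1 := Nat.mul_pos (Nat.mul_pos (Nat.mul_pos (hyperfac_pos a) (hyperfac_pos b))
        (hyperfac_pos c)) (hyperfac_pos (a + b + c))
      omega
    · exact h
  refine ⟨t, ht0, ?_⟩
  have hden : ((hyperfac (a + b) * hyperfac (b + c) * hyperfac (c + a) : ℕ) : ℚ) ≠ 0 := by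
    have := Nat.mul_pos (Nat.mul_pos (hyperfac_pos (a + b))
      (hyperfac_pos (b + c))) (hyperfac_pos (c + a))
    exact_mod_cast this.ne'
  rw [div_eq_iff hden]
  exact_mod_cast (by rw [hnum]; ring : hyperfac a * hyperfac b * hyperfac c *
    hyperfac (a + b + c) = t * (hyperfac (a + b) * hyperfac (b + c) * hyperfac (c + a)))
end
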